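/- Let (V,ρ) be an anchored A-module and n ≥ 1. The left A-action on the first tensor factor of Σ_V^{⊗_A n} descends to an A-module structure on Σ_V^{[n]}, and Σ_V^{[n]} is generated as an A-module (for this structure) by the classes of the pure tensors s₁⊗⋯⊗s_n in which, for some 0 ≤ m ≤ n, s_i = (0, v_i) with v_i ∈ V for i ≤ m and s_i = (1,0) for i > m. -/

import Mathlib

universe u

section SigmaPowers

variable {k : Type u} [CommRing k]

/-- The right `A`-action on the Atiyah bimodule `Σ_V = A × V`:
`(b,v)·a = (ba + ρ(v)(a), a•v)`. -/
def rA {A V : Type u} [CommRing A] [Algebra k A] [AddCommGroup V] [Module A V]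
    (ρ : V →ₗ[A] Derivation k A A) (s : A × V) (a : A) : A × V :=
  (s.1 * a + ρ s.2 a, a • s.2)

/-- The left `A`-action on the Atiyah bimodule `Σ_V = A × V`: `a·(b,v) = (ab, a•v)`. -/
def lA {A V : Type u} [CommRing A] [AddCommGroup V] [Module A V]
    (a : A) (s : A × V) : A × V :=
  (a * s.1, a • s.2)

variable (T : ℕ → Type u) [∀ n, AddCommGroup (T n)] [∀ n, Module k (T n)]
  (ins : ∀ n : ℕ, Fin (n + 1) → T n →ₗ[k] T (n + 1))

/-- The `k`-span of the differences `ι_p(x) − ι_q(x)` of unit insertions,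
inside `Σ_V^{⊗(n+1)}`. -/
def relSub (n : ℕ) : Submodule k (T (n + 1)) :=
  Submodule.span k {y | ∃ (x : T n) (p q : Fin (n + 1)), y = ins n p x - ins n q x}

/-- `Σ_V^{[n]}`: the quotient of `Σ_V^{⊗ n}` by the span of the differences of unit
insertions (with `Σ_V^{[0]} = A`, the empty tensor product). -/
def QSig (A : Type u) : ℕ → Type u
  | 0 => A
  | n + 1 => T (n + 1) ⧸ relSub T ins n

instance (A : Type u) [AddCommGroup A] : ∀ n, AddCommGroup (QSig T ins A n)
  | 0 => inferInstanceAs (AddCommGroup A)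
  | n + 1 => inferInstanceAs (AddCommGroup (T (n + 1) ⧸ relSub T ins n))

instance (A : Type u) [AddCommGroup A] [Module k A] : ∀ n, Module k (QSig T ins A n)
  | 0 => inferInstanceAs (Module k A)
  | n + 1 => inferInstanceAs (Module k (T (n + 1) ⧸ relSub T ins n))

/-- The canonical projection `Σ_V^{⊗ n} → Σ_V^{[n]}` (at level `0`, the inverse of the
canonical identification `e0 : A ≅ Σ_V^{⊗ 0}`). -/
def mkQSig {A : Type u} [AddCommGroup A] [Module k A] (e0 : A ≃ₗ[k] T 0) :
    ∀ n, T n → QSig T ins A n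
  | 0 => fun x => e0.symm x
  | _n + 1 => fun x => Submodule.Quotient.mk x

end SigmaPowers

/-!
The left action of `A` on the first factor of `Σ_V^{⊗(n+1)}` comes from the universal property
of the balanced tensor power, since acting on the first slot preserves balanced maps (the left and
right actions of `A` on `Σ_V` commute). It commutes with every unit insertion, for the first
slot because `a · 1 = 1 · a` in `Σ_V`, so it preserves the relations and descends to
`Σ_V^{[n+1]}`.

For generation, split every entry as `(b, v) = (b, 0) + (0, v)` and argue by downward induction
on the start `j` of a sorted tail of entries `(0, v), …, (0, v), 1, …, 1`. The scalar part
`(b, 0) = b · 1` of the entry in slot `j` is moved into slot `j - 1` by balancing (in slot `0` it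
becomes the action of `b`), and the unit left behind is moved to the end, which the relations of
`Σ_V^{[n+1]}` allow; this lengthens the sorted tail.
-/

universe w

open Function

section AtiyahActions

variable {k A V : Type u} [CommRing k] [CommRing A] [Algebra k A] [AddCommGroup V] [Module A V]

lemma lA_one (x : A × V) : lA 1 x = x := by simp [lA]

lemma lA_lA (a b : A) (x : A × V) : lA a (lA b x) = lA (a * b) x := by
  simp [lA, mul_assoc, mul_smul]

lemma lA_add (a : A) (x y : A × V) : lA a (x + y) = lA a x + lA a y := by
  simp [lA, mul_add, smul_add]

lemma add_lA (a b : A) (x : A × V) : lA (a + b) x = lA a x + lA b x := by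
  simp [lA, add_mul, add_smul]

lemma zero_lA (x : A × V) : lA 0 x = 0 := by simp [lA, Prod.ext_iff]

lemma lA_unit (a : A) : lA a ((1 : A), (0 : V)) = (a, 0) := by simp [lA]

lemma rA_unit (ρ : V →ₗ[A] Derivation k A A) (a : A) :
    rA ρ ((1 : A), (0 : V)) a = (a, 0) := by
  simp [rA]

lemma lA_rA (ρ : V →ₗ[A] Derivation k A A) (a b : A) (x : A × V) :
    lA a (rA ρ x b) = rA ρ (lA a x) b := by
  simp only [lA, rA, Prod.ext_iff, map_smul, Derivation.smul_apply, smul_eq_mul]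
  exact ⟨by ring, smul_comm a b x.2⟩

end AtiyahActions

namespace RingHom

variable {R M : Type*} [Semiring R] [AddCommGroup M]

def quotientEnd (φ : R →+* AddMonoid.End M) (P : AddSubgroup M)
    (hP : ∀ r, P ≤ P.comap (φ r)) : R →+* AddMonoid.End (M ⧸ P) where
  toFun r := QuotientAddGroup.map P P (φ r) (hP r)
  map_one' := AddMonoidHom.ext fun x => QuotientAddGroup.induction_on x fun x =>
    congrArg ((↑) : M → M ⧸ P) (DFunLike.congr_fun (map_one φ) x)
  map_mul' r s := AddMonoidHom.ext fun x => QuotientAddGroup.induction_on x fun x =>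
    congrArg ((↑) : M → M ⧸ P) (DFunLike.congr_fun (map_mul φ r s) x)
  map_zero' := AddMonoidHom.ext fun x => QuotientAddGroup.induction_on x fun x =>
    congrArg ((↑) : M → M ⧸ P) (DFunLike.congr_fun (map_zero φ) x)
  map_add' r s := AddMonoidHom.ext fun x => QuotientAddGroup.induction_on x fun x =>
    congrArg ((↑) : M → M ⧸ P) (DFunLike.congr_fun (map_add φ r s) x)

end RingHom

section BalancedMaps

variable {k A V : Type u} [CommRing k] [CommRing A] [Algebra k A] [AddCommGroup V] [Module A V]
  (ρ : V →ₗ[A] Derivation k A A)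

structure IsBalancedMap {N : Type*} [AddCommGroup N] {n : ℕ} (f : (Fin n → A × V) → N) :
    Prop where
  map_update_add (s : Fin n → A × V) (i : Fin n) (x y : A × V) :
    f (update s i (x + y)) = f (update s i x) + f (update s i y)
  map_update_rA (s : Fin n → A × V) (i j : Fin n) (hij : (i : ℕ) + 1 = j) (a : A) :
    f (update s i (rA ρ (s i) a)) = f (update s j (lA a (s j)))

structure IsTensorPower {M : Type w} [AddCommGroup M] {n : ℕ} (t : (Fin n → A × V) → M) :
    Prop where
  isBalancedMap : IsBalancedMap ρ t
  existsUnique_lift (N : Type w) [AddCommGroup N] (f : (Fin n → A × V) → N) :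
    IsBalancedMap ρ f → ∃! F : M →+ N, ∀ s, F (t s) = f s

variable {ρ}

namespace IsBalancedMap

variable {N N' : Type*} [AddCommGroup N] [AddCommGroup N'] {n : ℕ} {f : (Fin n → A × V) → N}

theorem map_update_zero (hf : IsBalancedMap ρ f) (s : Fin n → A × V) (i : Fin n) :
    f (update s i 0) = 0 := by
  simpa using hf.map_update_add s i 0 0

theorem comp (hf : IsBalancedMap ρ f) (G : N →+ N') : IsBalancedMap ρ (G ∘ f) where
  map_update_add s i x y := by simp only [comp_apply, hf.map_update_add, map_add]
  map_update_rA s i j hij a := by simp only [comp_apply, hf.map_update_rA s i j hij]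

theorem leftAct [NeZero n] (hf : IsBalancedMap ρ f) (a : A) :
    IsBalancedMap ρ fun s => f (update s 0 (lA a (s 0))) where
  map_update_add s i x y := by
    rcases eq_or_ne i 0 with rfl | hi
    · simpa only [update_self, update_idem, lA_add] using hf.map_update_add s 0 _ _
    · simp only [update_of_ne hi.symm, update_comm hi]
      exact hf.map_update_add _ i x y
  map_update_rA s i j hij b := by
    have hj : j ≠ 0 := fun h => by simp [h] at hij
    rcases eq_or_ne i 0 with rfl | hi
    · simpa [update_of_ne hj, update_of_ne hj.symm, update_comm hj, lA_rA]
        using hf.map_update_rA (update s 0 (lA a (s 0))) 0 j hij b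
    · simpa [update_of_ne hi, update_of_ne hj, update_of_ne hi.symm, update_of_ne hj.symm,
        update_comm hi, update_comm hj]
        using hf.map_update_rA (update s 0 (lA a (s 0))) i j hij b

end IsBalancedMap

namespace IsTensorPower

variable {M M' : Type w} [AddCommGroup M] [AddCommGroup M'] {n : ℕ}
  {t : (Fin n → A × V) → M} {t' : (Fin (n + 1) → A × V) → M'}

theorem addMonoidHom_ext (ht : IsTensorPower ρ t) {N : Type w} [AddCommGroup N] {F G : M →+ N}
    (h : ∀ s, F (t s) = G (t s)) : F = G :=
  (ht.existsUnique_lift N _ (ht.isBalancedMap.comp G)).unique h fun _ => rfl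

theorem closure_range_eq_top (ht : IsTensorPower ρ t) :
    AddSubgroup.closure (Set.range t) = ⊤ := by
  set P := AddSubgroup.closure (Set.range t)
  have hmk : QuotientAddGroup.mk' P = 0 := ht.addMonoidHom_ext fun s =>
    (QuotientAddGroup.eq_zero_iff _).2 (AddSubgroup.subset_closure ⟨s, rfl⟩)
  exact eq_top_iff.2 fun x _ => (QuotientAddGroup.eq_zero_iff x).1 (DFunLike.congr_fun hmk x)

noncomputable def lift (ht : IsTensorPower ρ t) {N : Type w} [AddCommGroup N]
    {f : (Fin n → A × V) → N} (hf : IsBalancedMap ρ f) : M →+ N :=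
  (ht.existsUnique_lift N f hf).exists.choose

@[simp]
theorem lift_apply (ht : IsTensorPower ρ t) {N : Type w} [AddCommGroup N]
    {f : (Fin n → A × V) → N} (hf : IsBalancedMap ρ f) (s : Fin n → A × V) :
    ht.lift hf (t s) = f s :=
  (ht.existsUnique_lift N f hf).exists.choose_spec s

variable [NeZero n]

noncomputable def leftAct (ht : IsTensorPower ρ t) : A →+* AddMonoid.End M where
  toFun a := ht.lift (ht.isBalancedMap.leftAct a)
  map_one' := ht.addMonoidHom_ext fun s => by
    simp only [lift_apply, lA_one, update_eq_self]; rfl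
  map_mul' a b := ht.addMonoidHom_ext fun s => by
    change _ = ht.lift _ (ht.lift _ (t s))
    simp [lA_lA]
  map_zero' := ht.addMonoidHom_ext fun s => by
    simp only [lift_apply, zero_lA, ht.isBalancedMap.map_update_zero]; rfl
  map_add' a b := ht.addMonoidHom_ext fun s => by
    change _ = ht.lift (ht.isBalancedMap.leftAct a) (t s) +
      ht.lift (ht.isBalancedMap.leftAct b) (t s)
    simp [add_lA, ht.isBalancedMap.map_update_add]

theorem leftAct_apply (ht : IsTensorPower ρ t) (a : A) (s : Fin n → A × V) :
    ht.leftAct a (t s) = t (update s 0 (lA a (s 0))) :=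
  ht.lift_apply (ht.isBalancedMap.leftAct a) s

theorem leftAct_comm_insertUnit (ht : IsTensorPower ρ t) (ht' : IsTensorPower ρ t')
    (ι : M →+ M') (p : Fin (n + 1)) (hι : ∀ s, ι (t s) = t' (p.insertNth (1, 0) s)) (a : A)
    (x : M) : ht'.leftAct a (ι x) = ι (ht.leftAct a x) := by
  suffices (ht'.leftAct a).comp ι = ι.comp (ht.leftAct a) from DFunLike.congr_fun this x
  refine ht.addMonoidHom_ext fun s => ?_
  change ht'.leftAct a (ι (t s)) = ι (ht.leftAct a (t s))
  rw [hι, leftAct_apply, leftAct_apply, hι]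
  rcases eq_or_ne p 0 with rfl | hp
  · -- `a · 1 = 1 · a` in `Σ_V`: balancing moves `a` past the inserted unit
    have hbal := ht'.isBalancedMap.map_update_rA (Fin.cons (1, 0) s) 0 (Fin.succ 0)
      (by simp only [Fin.val_zero, Fin.val_succ]) a
    rw [Fin.cons_zero, Fin.cons_succ, rA_unit] at hbal
    rwa [Fin.insertNth_zero', Fin.insertNth_zero', Fin.cons_zero, lA_unit, Fin.cons_update]
  · have h0 : p.succAbove 0 = 0 := Fin.succAbove_ne_zero_zero hp
    rw [← h0, Fin.insertNth_apply_succAbove, Fin.insertNth_update]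

end IsTensorPower

end BalancedMaps

section SortedTensors

variable {A V : Type*} [Zero A] [One A] [Zero V]

def IsSortedFrom {N : ℕ} (j : ℕ) (s : Fin N → A × V) : Prop :=
  ∃ m : ℕ, ∀ i : Fin N, j ≤ i → s i = if (i : ℕ) < m then (0, (s i).2) else (1, 0)

theorem isSortedFrom_of_le {N j : ℕ} (h : N ≤ j) (s : Fin N → A × V) : IsSortedFrom j s :=
  ⟨0, fun i _ => absurd i.isLt (by omega)⟩

theorem IsSortedFrom.congr {N j : ℕ} {s s' : Fin N → A × V} (hs : IsSortedFrom j s)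
    (h : ∀ i : Fin N, j ≤ i → s' i = s i) : IsSortedFrom j s' := by
  obtain ⟨m, hm⟩ := hs
  exact ⟨m, fun i hi => by rw [h i hi]; exact hm i hi⟩

theorem IsSortedFrom.update_zero {N : ℕ} {s : Fin N → A × V} {J : Fin N}
    (hs : IsSortedFrom (J + 1) s) (v : V) : IsSortedFrom J (update s J (0, v)) := by
  obtain ⟨m, hm⟩ := hs
  refine ⟨max m (J + 1), fun i hi => ?_⟩
  rcases eq_or_ne i J with rfl | hiJ
  · simp
  · have hi' : (J : ℕ) + 1 ≤ i := by have := Fin.val_ne_of_ne hiJ; omega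
    rw [update_of_ne hiJ, hm i hi']
    split_ifs <;> first | rfl | omega

theorem IsSortedFrom.snoc_removeNth {n : ℕ} {t : Fin (n + 1) → A × V} {p : Fin (n + 1)}
    (ht : IsSortedFrom (p + 1) t) :
    IsSortedFrom p (Fin.snoc (p.removeNth t) ((1 : A), (0 : V)) : Fin (n + 1) → A × V) := by
  obtain ⟨m, hm⟩ := ht
  refine ⟨min (m - 1) n, fun i hi => ?_⟩
  induction i using Fin.lastCases with
  | last => simp
  | cast i =>
    have hsucc : p.succAbove i = i.succ := Fin.succAbove_of_le_castSucc _ _ (Fin.le_def.2 hi)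
    have hi' := hm i.succ (by simp only [Fin.val_succ, Fin.val_castSucc] at hi ⊢; omega)
    simp only [Fin.snoc_castSucc, Fin.removeNth, hsucc, Fin.val_castSucc]
    rw [hi']
    simp only [Fin.val_succ]
    split_ifs <;> first | rfl | omega

end SortedTensors

section Relations

variable {k : Type u} [CommRing k] {T : ℕ → Type u} [∀ n, AddCommGroup (T n)]
  [∀ n, Module k (T n)] {ins : ∀ n : ℕ, Fin (n + 1) → T n →ₗ[k] T (n + 1)}

theorem relSub_zero : relSub T ins 0 = ⊥ :=
  Submodule.span_eq_bot.2 fun _ ⟨x, p, q, h⟩ => by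
    rw [h, Subsingleton.elim (α := Fin 1) p q, sub_self]

/-- The generators of `relSub` are closed under scaling by `k` (the unit insertions are
`k`-linear), so additive `φ` and `ψ` suffice. -/
theorem relSub_le_comap {n : ℕ} (φ : T (n + 1) →+ T (n + 1)) (ψ : T n →+ T n)
    (h : ∀ p x, φ (ins n p x) = ins n p (ψ x)) :
    (relSub T ins n).toAddSubgroup ≤ (relSub T ins n).toAddSubgroup.comap φ := by
  intro y hy
  induction hy using Submodule.closure_induction with
  | zero => simp
  | add x y _ _ hx hy => simpa using add_mem hx hy
  | smul_mem c y hy =>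
    obtain ⟨x, p, q, rfl⟩ := hy
    change φ _ ∈ relSub T ins n
    rw [smul_sub, ← map_smul, ← map_smul, map_sub, h, h]
    exact Submodule.subset_span ⟨_, p, q, rfl⟩

theorem mk_tt_eq_snoc_removeNth {A V : Type*} [One A] [Zero V]
    {tt : ∀ n, (Fin n → A × V) → T n}
    (hins : ∀ n, 1 ≤ n → ∀ (p : Fin (n + 1)) (s : Fin n → A × V),
      ins n p (tt n s) = tt (n + 1) (p.insertNth ((1 : A), (0 : V)) s))
    {n : ℕ} {t : Fin (n + 1) → A × V} {p : Fin (n + 1)} (hp : t p = (1, 0)) :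
    (tt (n + 1) t : T (n + 1) ⧸ (relSub T ins n).toAddSubgroup) =
      tt (n + 1) (Fin.snoc (p.removeNth t) ((1 : A), (0 : V))) := by
  obtain _ | m := n
  · have hfin : ∀ i : Fin 1, i = Fin.last 0 := fun i => Subsingleton.elim _ _
    rw [show Fin.snoc (p.removeNth t) ((1 : A), (0 : V)) = t from
      funext fun i => by rw [hfin i, Fin.snoc_last, ← hp, hfin p]]
  · have e1 : tt (m + 2) t = ins (m + 1) p (tt (m + 1) (p.removeNth t)) := by
      rw [hins _ m.succ_pos, Fin.insertNth_removeNth, ← hp, update_eq_self]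
    have e2 : tt (m + 2) (Fin.snoc (p.removeNth t) ((1 : A), (0 : V))) =
        ins (m + 1) (Fin.last _) (tt (m + 1) (p.removeNth t)) := by
      rw [hins _ m.succ_pos, Fin.insertNth_last']
    rw [e1, e2, QuotientAddGroup.eq_iff_sub_mem]
    exact Submodule.subset_span ⟨_, p, Fin.last _, rfl⟩

end Relations

section QuotientAction

variable {k A V : Type u} [CommRing k] [CommRing A] [Algebra k A] [AddCommGroup V] [Module A V]
  {ρ : V →ₗ[A] Derivation k A A}
  {T : ℕ → Type u} [∀ n, AddCommGroup (T n)] [∀ n, Module k (T n)]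
  {ins : ∀ n : ℕ, Fin (n + 1) → T n →ₗ[k] T (n + 1)}
  {tt : ∀ n, (Fin n → A × V) → T n} (hT : ∀ n, IsTensorPower ρ (tt (n + 1)))
  (hins : ∀ n, 1 ≤ n → ∀ (p : Fin (n + 1)) (s : Fin n → A × V),
    ins n p (tt n s) = tt (n + 1) (p.insertNth ((1 : A), (0 : V)) s))

include hT hins in
theorem relSub_le_comap_leftAct (n : ℕ) (a : A) :
    (relSub T ins n).toAddSubgroup ≤ (relSub T ins n).toAddSubgroup.comap ((hT n).leftAct a) := by
  cases n with
  | zero => simp [relSub_zero]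
  | succ m =>
    exact relSub_le_comap _ ((hT m).leftAct a) fun p x =>
      (hT m).leftAct_comm_insertUnit (hT (m + 1)) (ins (m + 1) p).toAddMonoidHom p
        (hins _ m.succ_pos p) a x

noncomputable def quotLeftAct (n : ℕ) :
    A →+* AddMonoid.End (T (n + 1) ⧸ (relSub T ins n).toAddSubgroup) :=
  (hT n).leftAct.quotientEnd _ (relSub_le_comap_leftAct hT hins n)

theorem quotLeftAct_mk (n : ℕ) (a : A) (s : Fin (n + 1) → A × V) :
    quotLeftAct hT hins n a (tt (n + 1) s : T (n + 1) ⧸ (relSub T ins n).toAddSubgroup) =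
      (tt (n + 1) (update s 0 (lA a (s 0))) : T (n + 1) ⧸ (relSub T ins n).toAddSubgroup) :=
  congrArg _ ((hT n).leftAct_apply a s)

variable (n : ℕ)

def sortedTensors : Set (T (n + 1) ⧸ (relSub T ins n).toAddSubgroup) :=
  {y | ∃ (a : A) (m : ℕ) (vv : Fin (n + 1) → V) (s : Fin (n + 1) → A × V),
    (∀ i : Fin (n + 1), s i = if (i : ℕ) < m then ((0 : A), vv i) else ((1 : A), (0 : V))) ∧
    y = quotLeftAct hT hins n a (tt (n + 1) s : T (n + 1) ⧸ (relSub T ins n).toAddSubgroup)}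

include hT hins in
theorem mk_tt_mem_closure_sortedTensors (j : ℕ) :
    ∀ s : Fin (n + 1) → A × V, IsSortedFrom j s →
      (tt (n + 1) s : T (n + 1) ⧸ (relSub T ins n).toAddSubgroup) ∈
        AddSubgroup.closure (sortedTensors hT hins n) := by
  induction j with
  | zero =>
    rintro s ⟨m, hm⟩
    exact AddSubgroup.subset_closure ⟨1, m, _, s, fun i => hm i (Nat.zero_le _), by
      rw [map_one]; rfl⟩
  | succ j ih =>
    intro s hs
    by_cases hj : n + 1 ≤ j
    · exact ih s (isSortedFrom_of_le hj s)
    set J : Fin (n + 1) := ⟨j, by omega⟩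
    have hsplit : tt (n + 1) s =
        tt (n + 1) (update s J ((s J).1, 0)) + tt (n + 1) (update s J (0, (s J).2)) := by
      rw [← (hT n).isBalancedMap.map_update_add]
      simp
    rw [hsplit, QuotientAddGroup.mk_add]
    refine add_mem ?_ (ih _ (hs.update_zero (J := J) _))
    set u := update s J ((1 : A), (0 : V))
    have hu : IsSortedFrom (J + 1) u := hs.congr fun i hi =>
      update_of_ne (by rintro rfl; simp [J] at hi) _ _
    have hscal : update s J ((s J).1, 0) = update u J (lA (s J).1 (u J)) := by
      simp [u, lA_unit]
    rw [hscal]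
    rcases j with _ | i
    · obtain ⟨m, hm⟩ := hu.snoc_removeNth
      refine AddSubgroup.subset_closure ⟨(s J).1, m, _, _, fun i => hm i (Nat.zero_le _), ?_⟩
      rw [← mk_tt_eq_snoc_removeNth hins (update_self _ _ _), quotLeftAct_mk]
      rfl
    · set J' : Fin (n + 1) := ⟨i, by omega⟩
      have hJ' : J ≠ J' := by simp [J, J']
      rw [← (hT n).isBalancedMap.map_update_rA u J' J rfl,
        mk_tt_eq_snoc_removeNth hins (p := J) (by simp [update_of_ne hJ', u])]
      refine ih _ (IsSortedFrom.snoc_removeNth (hu.congr fun l hl => update_of_ne ?_ _ _))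
      rintro rfl
      simp [J, J'] at hl

include hT hins in
theorem closure_sortedTensors_eq_top : AddSubgroup.closure (sortedTensors hT hins n) = ⊤ := by
  have h : AddSubgroup.closure (Set.range (tt (n + 1))) ≤
      (AddSubgroup.closure (sortedTensors hT hins n)).comap (QuotientAddGroup.mk' _) :=
    (AddSubgroup.closure_le _).2 <| Set.range_subset_iff.2 fun s =>
      mk_tt_mem_closure_sortedTensors hT hins n (n + 1) s (isSortedFrom_of_le le_rfl s)
  rw [(hT n).closure_range_eq_top] at h
  exact eq_top_iff.2 fun x _ => QuotientAddGroup.induction_on x fun t => h (AddSubgroup.mem_top t)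

end QuotientAction

theorem stmt_16_general (k A V : Type u) [Field k] [CommRing A] [Algebra k A]
    [AddCommGroup V] [Module A V]
    (ρ : V →ₗ[A] Derivation k A A)
    (T : ℕ → Type u) [∀ n, AddCommGroup (T n)] [∀ n, Module k (T n)]
    (tt : ∀ n : ℕ, (Fin n → A × V) → T n)
    (ins : ∀ n : ℕ, Fin (n + 1) → T n →ₗ[k] T (n + 1))
    (e0 : A ≃ₗ[k] T 0)
    (tt_add : ∀ (n : ℕ) (s : Fin n → A × V) (i : Fin n) (x y : A × V),
      tt n (Function.update s i (x + y)) =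
        tt n (Function.update s i x) + tt n (Function.update s i y))
    (tt_bal : ∀ (n : ℕ) (s : Fin n → A × V) (i j : Fin n), (i : ℕ) + 1 = (j : ℕ) →
      ∀ a : A, tt n (Function.update s i (rA ρ (s i) a)) =
        tt n (Function.update s j (lA a (s j))))
    (tt_univ : ∀ n : ℕ, 1 ≤ n → ∀ (N : Type u) [AddCommGroup N]
      (f : (Fin n → A × V) → N),
      (∀ (s : Fin n → A × V) (i : Fin n) (x y : A × V),
        f (Function.update s i (x + y)) =
          f (Function.update s i x) + f (Function.update s i y)) →
      (∀ (s : Fin n → A × V) (i j : Fin n), (i : ℕ) + 1 = (j : ℕ) →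
        ∀ a : A, f (Function.update s i (rA ρ (s i) a)) =
          f (Function.update s j (lA a (s j)))) →
      ∃! F : T n →+ N, ∀ s, F (tt n s) = f s)
    (hins : ∀ (n : ℕ), 1 ≤ n → ∀ (p : Fin (n + 1)) (s : Fin n → A × V),
      ins n p (tt n s) = tt (n + 1) (p.insertNth ((1 : A), (0 : V)) s)) :
    ∀ n : ℕ,
      ∃ sm : A → QSig T ins A (n + 1) → QSig T ins A (n + 1),
        -- `sm` is an `A`-module structure on `Σ_V^{[n+1]}` …
        (∀ x, sm 1 x = x) ∧
        (∀ (a b : A) (x), sm (a * b) x = sm a (sm b x)) ∧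
        (∀ (a : A) (x y), sm a (x + y) = sm a x + sm a y) ∧
        (∀ (a b : A) (x), sm (a + b) x = sm a x + sm b x) ∧
        (∀ a : A, sm a 0 = 0) ∧
        (∀ x, sm 0 x = 0) ∧
        -- … obtained by descending the left `A`-action on the first tensor factor
        (∀ (a : A) (s : Fin (n + 1) → A × V),
          sm a (mkQSig T ins e0 (n + 1) (tt (n + 1) s)) =
            mkQSig T ins e0 (n + 1)
              (tt (n + 1) (Function.update s 0 (lA a (s 0))))) ∧
        -- generation: `Σ_V^{[n+1]}` is the `A`-span of the classes of the pure tensors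
        -- with entries `(0, vᵢ)` for `i < m` and `(1, 0)` for `i ≥ m`
        (∀ x : QSig T ins A (n + 1),
          x ∈ AddSubgroup.closure
            {y | ∃ (a : A) (m : ℕ) (vv : Fin (n + 1) → V) (s : Fin (n + 1) → A × V),
              (∀ i : Fin (n + 1),
                s i = if (i : ℕ) < m then ((0 : A), vv i) else ((1 : A), (0 : V))) ∧
              y = sm a (mkQSig T ins e0 (n + 1) (tt (n + 1) s))}) := by
  intro n
  have hT : ∀ n, IsTensorPower ρ (tt (n + 1)) := fun n =>
    ⟨⟨tt_add _, tt_bal _⟩, fun N _ f hf => tt_univ (n + 1) n.succ_pos N f hf.1 hf.2⟩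
  set σ := quotLeftAct hT hins n
  exact ⟨fun a (x : T (n + 1) ⧸ (relSub T ins n).toAddSubgroup) => σ a x,
    fun x => DFunLike.congr_fun (map_one σ) x, fun a b x => DFunLike.congr_fun (map_mul σ a b) x,
    fun a => map_add (σ a), fun a b x => DFunLike.congr_fun (map_add σ a b) x,
    fun a => map_zero (σ a), fun x => DFunLike.congr_fun (map_zero σ) x,
    quotLeftAct_mk hT hins n,
    fun x => closure_sortedTensors_eq_top hT hins n ▸ AddSubgroup.mem_top x⟩

/-- Let `(V,ρ)` be an anchored `A`-module and `n ≥ 1` (below, `n+1`).  Let `T m` (with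
`tt`, `ins`, `e0`) be a realization of the tensor powers `Σ_V^{⊗ m}` of the Atiyah
bimodule, and let `Σ_V^{[m]} = QSig` be the quotient of `Σ_V^{⊗ m}` by the span of the
differences of unit insertions.  Then the left `A`-action on the first tensor factor of
`Σ_V^{⊗(n+1)}` descends to an `A`-module structure `sm` on `Σ_V^{[n+1]}`, and
`Σ_V^{[n+1]}` is generated as an `A`-module (for this structure) by the classes of the
pure tensors `s₁⊗⋯⊗s_{n+1}` in which, for some `m`, `s_i = (0, v_i)` for `i < m` and
`s_i = (1,0)` for `i ≥ m`. -/
theorem stmt_16 (k A V : Type u) [Field k] [CharZero k] [CommRing A] [Algebra k A]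
    [AddCommGroup V] [Module k V] [Module A V] [IsScalarTower k A V]
    (ρ : V →ₗ[A] Derivation k A A)
    (T : ℕ → Type u) [∀ n, AddCommGroup (T n)] [∀ n, Module k (T n)]
    (tt : ∀ n : ℕ, (Fin n → A × V) → T n)
    (ins : ∀ n : ℕ, Fin (n + 1) → T n →ₗ[k] T (n + 1))
    (e0 : A ≃ₗ[k] T 0)
    (tt_add : ∀ (n : ℕ) (s : Fin n → A × V) (i : Fin n) (x y : A × V),
      tt n (Function.update s i (x + y)) =
        tt n (Function.update s i x) + tt n (Function.update s i y))
    (tt_smul : ∀ (n : ℕ) (s : Fin n → A × V) (i : Fin n) (c : k),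
      c • tt n s = tt n (Function.update s i (c • s i)))
    (tt_bal : ∀ (n : ℕ) (s : Fin n → A × V) (i j : Fin n), (i : ℕ) + 1 = (j : ℕ) →
      ∀ a : A, tt n (Function.update s i (rA ρ (s i) a)) =
        tt n (Function.update s j (lA a (s j))))
    (tt_univ : ∀ n : ℕ, 1 ≤ n → ∀ (N : Type u) [AddCommGroup N]
      (f : (Fin n → A × V) → N),
      (∀ (s : Fin n → A × V) (i : Fin n) (x y : A × V),
        f (Function.update s i (x + y)) =
          f (Function.update s i x) + f (Function.update s i y)) →
      (∀ (s : Fin n → A × V) (i j : Fin n), (i : ℕ) + 1 = (j : ℕ) →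
        ∀ a : A, f (Function.update s i (rA ρ (s i) a)) =
          f (Function.update s j (lA a (s j)))) →
      ∃! F : T n →+ N, ∀ s, F (tt n s) = f s)
    (hins : ∀ (n : ℕ), 1 ≤ n → ∀ (p : Fin (n + 1)) (s : Fin n → A × V),
      ins n p (tt n s) = tt (n + 1) (p.insertNth ((1 : A), (0 : V)) s))
    (hins0 : ∀ (p : Fin 1) (a : A),
      ins 0 p (e0 a) = tt 1 (fun _ => (a, (0 : V)))) :
    ∀ n : ℕ,
      ∃ sm : A → QSig T ins A (n + 1) → QSig T ins A (n + 1),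
        -- `sm` is an `A`-module structure on `Σ_V^{[n+1]}` …
        (∀ x, sm 1 x = x) ∧
        (∀ (a b : A) (x), sm (a * b) x = sm a (sm b x)) ∧
        (∀ (a : A) (x y), sm a (x + y) = sm a x + sm a y) ∧
        (∀ (a b : A) (x), sm (a + b) x = sm a x + sm b x) ∧
        (∀ a : A, sm a 0 = 0) ∧
        (∀ x, sm 0 x = 0) ∧
        -- … obtained by descending the left `A`-action on the first tensor factor
        (∀ (a : A) (s : Fin (n + 1) → A × V),
          sm a (mkQSig T ins e0 (n + 1) (tt (n + 1) s)) =
            mkQSig T ins e0 (n + 1)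
              (tt (n + 1) (Function.update s 0 (lA a (s 0))))) ∧
        -- generation: `Σ_V^{[n+1]}` is the `A`-span of the classes of the pure tensors
        -- with entries `(0, vᵢ)` for `i < m` and `(1, 0)` for `i ≥ m`
        (∀ x : QSig T ins A (n + 1),
          x ∈ AddSubgroup.closure
            {y | ∃ (a : A) (m : ℕ) (vv : Fin (n + 1) → V) (s : Fin (n + 1) → A × V),
              (∀ i : Fin (n + 1),
                s i = if (i : ℕ) < m then ((0 : A), vv i) else ((1 : A), (0 : V))) ∧
              y = sm a (mkQSig T ins e0 (n + 1) (tt (n + 1) s))}) :=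
  stmt_16_general k A V ρ T tt ins e0 tt_add tt_bal tt_univ hins
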